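/- arXiv:1205.1753 — 2 statements merged into one kernel-verified Lean document; each statement's English description precedes it below -/
import Mathlib

section
/- Let k be an algebraically closed field of characteristic p and let V be a finite-dimensional k-vector space with a Frobenius-semilinear endomorphism Φ (i.e. Φ(λv) = λ^p Φ(v)). Then the additive map 1 − Φ : V → V is surjective. -/
open Polynomial Finset

set_option maxHeartbeats 1000000

/-- Let `k` be an algebraically closed field of characteristic `p` and `V` a
finite-dimensional `k`-vector space with a Frobenius-semilinear endomorphism `Φ`
(i.e. `Φ (λ • v) = λ ^ p • Φ v`).  Then the additive map `1 - Φ : V → V` is surjective. -/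
theorem one_sub_frobenius_semilinear_surjective
    (p : ℕ) [Fact p.Prime] (k : Type*) [Field k] [IsAlgClosed k] [CharP k p]
    (V : Type*) [AddCommGroup V] [Module k V] [FiniteDimensional k V]
    (Φ : V →+ V) (hΦ : ∀ (c : k) (v : V), Φ (c • v) = c ^ p • Φ v) :
    Function.Surjective (fun v : V => v - Φ v) := by
  classical
  intro w
  -- there is some N for which the first N iterates of Φ on w are dependent
  have hdep : ∃ N, ¬ LinearIndependent k (fun i : Fin N => Φ^[(i : ℕ)] w) := by
    refine ⟨Module.finrank k V + 1, fun h => ?_⟩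
    have := h.fintype_card_le_finrank
    simp at this
  -- take the minimal such N; it is positive, say N = n + 1
  have hmdep : ¬ LinearIndependent k (fun i : Fin (Nat.find hdep) => Φ^[(i : ℕ)] w) :=
    Nat.find_spec hdep
  have hmpos : 0 < Nat.find hdep := by
    rcases Nat.eq_zero_or_pos (Nat.find hdep) with h | h
    · exact absurd (h ▸ hmdep) (not_not.mpr linearIndependent_empty_type)
    · exact h
  obtain ⟨n, hn⟩ := Nat.exists_eq_succ_of_ne_zero hmpos.ne'
  have hind : LinearIndependent k (fun i : Fin n => Φ^[(i : ℕ)] w) :=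
    not_not.mp (Nat.find_min hdep (by omega))
  -- Φ^[n] w lies in the span of the previous iterates
  have hsnoc : (fun i : Fin (n + 1) => Φ^[(i : ℕ)] w)
      = Fin.snoc (fun i : Fin n => Φ^[(i : ℕ)] w) (Φ^[n] w) := by
    funext i
    refine Fin.lastCases ?_ (fun j => ?_) i <;> simp
  have hmem : Φ^[n] w ∈ Submodule.span k (Set.range fun i : Fin n => Φ^[(i : ℕ)] w) := by
    by_contra hx
    rw [hn, hsnoc] at hmdep
    exact hmdep (linearIndependent_fin_snoc.mpr ⟨hind, hx⟩)
  obtain ⟨c, hc⟩ := (Submodule.mem_span_range_iff_exists_fun k).mp hmem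
  -- extend coefficients to ℕ
  set cc : ℕ → k := fun i => if h : i < n then c ⟨i, h⟩ else 0 with hcc
  have hrel : ∑ i ∈ Finset.range n, cc i • Φ^[i] w = Φ^[n] w := by
    rw [← hc, ← Fin.sum_univ_eq_sum_range (fun i => cc i • Φ^[i] w) n]
    refine Finset.sum_congr rfl fun i _ => ?_
    simp [hcc, i.isLt]
  -- dispose of the degenerate case n = 0 (then w = 0)
  rcases Nat.eq_zero_or_pos n with hn0 | hnpos
  · subst hn0
    have hw : w = 0 := by simpa using hrel.symm
    exact ⟨0, by simp [hw]⟩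
  obtain ⟨q, rfl⟩ := Nat.exists_eq_succ_of_ne_zero hnpos.ne'
  -- the polynomials A i encoding the coefficients of the candidate solution
  set A : ℕ → k[X] := fun i => Nat.rec (C (cc 0) * X ^ p + 1)
      (fun j Aj => Aj ^ p + C (cc (j + 1)) * X ^ p) i with hA
  have hA0 : A 0 = C (cc 0) * X ^ p + 1 := rfl
  have hAsucc : ∀ j, A (j + 1) = (A j) ^ p + C (cc (j + 1)) * X ^ p := fun j => rfl
  have hpk : (p : k) = 0 := CharP.cast_eq_zero k p
  have hder : ∀ i, derivative (A i) = 0 := by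
    intro i
    induction i with
    | zero => simp [hA0, derivative_X_pow, hpk]
    | succ j ih => simp [hAsucc, derivative_pow, derivative_X_pow, ih, hpk]
  -- find a root of A q - X
  have hQderiv : derivative (A q - X) = -1 := by simp [hder q]
  have hQdeg : (A q - X).degree ≠ 0 := by
    intro h
    have hC : A q - X = C ((A q - X).coeff 0) := Polynomial.eq_C_of_degree_le_zero h.le
    rw [hC, derivative_C] at hQderiv
    exact one_ne_zero (neg_eq_zero.mp hQderiv.symm)
  obtain ⟨t, ht⟩ := IsAlgClosed.exists_root (A q - X) hQdeg
  set b : ℕ → k := fun i => (A i).eval t with hb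
  have hb0 : b 0 = cc 0 * t ^ p + 1 := by simp [hb, hA0]
  have hbsucc : ∀ j, b (j + 1) = (b j) ^ p + cc (j + 1) * t ^ p := by
    intro j; simp [hb, hAsucc]
  have hbq : b q = t := by
    have : (A q - X).eval t = 0 := ht
    simpa [sub_eq_zero, hb] using this
  -- the candidate solution
  set v : V := ∑ i ∈ Finset.range (q + 1), b i • Φ^[i] w with hv
  refine ⟨v, ?_⟩
  have hΦv : Φ v = ∑ i ∈ Finset.range (q + 1), (b i) ^ p • Φ^[i + 1] w := by
    rw [hv, map_sum]
    refine Finset.sum_congr rfl fun i _ => ?_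
    rw [hΦ, Function.iterate_succ_apply']
  have e1 : Φ v = (∑ i ∈ Finset.range q, (b i) ^ p • Φ^[i + 1] w) + t ^ p • Φ^[q + 1] w := by
    rw [hΦv, Finset.sum_range_succ, hbq]
  have e2 : t ^ p • (Φ^[q + 1] w)
      = (∑ i ∈ Finset.range q, (t ^ p * cc (i + 1)) • Φ^[i + 1] w) + (t ^ p * cc 0) • w := by
    rw [← hrel, Finset.smul_sum]
    rw [Finset.sum_range_succ' (fun i => t ^ p • (cc i • Φ^[i] w)) q]
    simp [smul_smul]
  have e3 : v = (∑ i ∈ Finset.range q, b (i + 1) • Φ^[i + 1] w) + b 0 • w := by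
    rw [hv, Finset.sum_range_succ' (fun i => b i • Φ^[i] w) q]
    simp
  have key : Φ v + w = v := by
    calc Φ v + w
        = ((∑ i ∈ Finset.range q, (b i) ^ p • Φ^[i + 1] w)
            + ((∑ i ∈ Finset.range q, (t ^ p * cc (i + 1)) • Φ^[i + 1] w)
              + (t ^ p * cc 0) • w)) + w := by rw [e1, e2]
      _ = (∑ i ∈ Finset.range q,
            ((b i) ^ p • Φ^[i + 1] w + (t ^ p * cc (i + 1)) • Φ^[i + 1] w))
            + ((t ^ p * cc 0) • w + w) := by rw [Finset.sum_add_distrib]; abel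
      _ = (∑ i ∈ Finset.range q, b (i + 1) • Φ^[i + 1] w) + b 0 • w := by
            congr 1
            · refine Finset.sum_congr rfl fun i _ => ?_
              rw [← add_smul]
              congr 1
              rw [hbsucc i]; ring
            · rw [hb0, add_smul, one_smul, mul_comm]
      _ = v := e3.symm
  show v - Φ v = w
  exact sub_eq_iff_eq_add'.mpr key.symm
end

section
/- Let k be an algebraic closure of F_q (q a power of p), let M be a finitely generated W_n(k)-module, and let Φ : M → M be a σ-linear endomorphism, where σ is the Witt-vector Frobenius on W_n(k). Then the map 1 − Φ : M → M is surjective. -/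
/-- An algebraic closure of the finite field `𝔽_q` with `q = p ^ d` elements. -/
abbrev FqBar (p d : ℕ) [Fact p.Prime] : Type :=
  AlgebraicClosure (GaloisField p d)

/-- The Frobenius `σ` of the truncated Witt vectors `W_n(R)` of a ring `R` of characteristic
`p`, induced by the `p`-th power map on `R`: it acts coefficientwise by `x ↦ x ^ p`. -/
noncomputable def truncatedWittFrobenius (p n : ℕ) [Fact p.Prime] (R : Type*) [CommRing R] :
    TruncatedWittVector p n R → TruncatedWittVector p n R :=
  fun x => TruncatedWittVector.mk p fun i => x.coeff i ^ p

/-!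
Since `σ` fixes `p` and `p ^ n = 0` in `W_n(k)`, successive `p`-adic approximation reduces the
claim to `M / pM`, a finite-dimensional vector space over `W_n(k) / p ≅ k` on which `Φ` induces a
map `φ` with `φ (c • x) = c ^ p • φ x`. For such a map, the iterates of a vector `v` satisfy a
relation `φ^[m+1] v = ∑_{i ≤ m} c i • φ^[i] v`, and the ansatz `x = ∑_{i ≤ m} t i • φ^[i] v`
turns `x - φ x = v` into `t 0 = c 0 * s ^ q + 1`, `t (i+1) = t i ^ q + c (i+1) * s ^ q` with
`s = t m`. Thus `t m = P (s ^ q)` for a polynomial `P`, and `P (s ^ q) = s` is solvable over an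
algebraically closed field because `X - P (X ^ q)` has linear coefficient `1`, so is not constant.
-/

universe u

open Finset Function

section SemilinearEndomorphism

open Polynomial

theorem IsNoetherian.exists_eq_sum_range_smul {R M : Type*} [Ring R] [AddCommGroup M]
    [Module R M] [IsNoetherian R M] (f : ℕ → M) :
    ∃ m, ∃ c : ℕ → R, f m = ∑ i ∈ range m, c i • f i := by
  let N : ℕ →o Submodule R M :=
    ⟨fun m => Submodule.span R (f '' Set.Iio m),
      fun _ _ h => Submodule.span_mono (Set.image_mono (Set.Iio_subset_Iio h))⟩
  obtain ⟨m, hm⟩ := monotone_stabilizes_iff_noetherian.mpr ‹_› N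
  have hmem : f m ∈ N m := (hm (m + 1) m.le_succ).symm ▸
    Submodule.subset_span (Set.mem_image_of_mem f (Set.mem_Iio.2 m.lt_succ_self))
  obtain ⟨l, hl, hfm⟩ := (Finsupp.mem_span_image_iff_linearCombination R).mp hmem
  refine ⟨m, l, ?_⟩
  rw [← hfm, Finsupp.linearCombination_apply]
  refine Finsupp.sum_of_support_subset l (fun i hi => ?_) _ fun _ _ => zero_smul R _
  simpa using hl hi

theorem IsAlgClosed.exists_eval_pow_eq_self {K : Type*} [Field K] [IsAlgClosed K] (f : K[X])
    {q : ℕ} (hq : 1 < q) : ∃ s : K, f.eval (s ^ q) = s := by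
  have hcoeff : (X - expand K q f).coeff 1 = 1 := by
    rw [coeff_sub, coeff_expand (by omega), if_neg (Nat.not_dvd_of_pos_of_lt one_pos hq)]
    simp
  obtain ⟨s, hs⟩ := IsAlgClosed.exists_root (X - expand K q f) fun h => by
    rw [eq_C_of_degree_eq_zero h, coeff_C] at hcoeff
    simp at hcoeff
  exact ⟨s, (sub_eq_zero.mp (by simpa using hs)).symm⟩

/-- The coefficients `t i` of the ansatz, as polynomials in `s ^ q`. -/
noncomputable def frobeniusCyclicPoly {K : Type*} [CommRing K] (q : ℕ) (c : ℕ → K) : ℕ → K[X]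
  | 0 => C (c 0) * X + 1
  | i + 1 => frobeniusCyclicPoly q c i ^ q + C (c (i + 1)) * X

theorem sub_map_sum_smul_iterate_eq {A V : Type*} [CommRing A] [AddCommGroup V] [Module A V]
    {q : ℕ} (φ : V →+ V) (hφ : ∀ (a : A) (x : V), φ (a • x) = a ^ q • φ x) (v : V) (m : ℕ)
    (c t : ℕ → A) (hrel : φ^[m + 1] v = ∑ i ∈ range (m + 1), c i • φ^[i] v)
    (ht₀ : t 0 = c 0 * t m ^ q + 1) (ht : ∀ i, t (i + 1) = t i ^ q + c (i + 1) * t m ^ q) :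
    (∑ i ∈ range (m + 1), t i • φ^[i] v) - φ (∑ i ∈ range (m + 1), t i • φ^[i] v) = v := by
  have hφx : φ (∑ i ∈ range (m + 1), t i • φ^[i] v)
      = ∑ i ∈ range m, t i ^ q • φ^[i + 1] v + t m ^ q • φ^[m + 1] v := by
    rw [map_sum, sum_range_succ]
    simp only [hφ, iterate_succ_apply']
  rw [hφx, hrel, sum_range_succ' (fun i => t i • _), sum_range_succ' (fun i => c i • _)]
  simp only [ht, ht₀, add_smul, sum_add_distrib, smul_add, smul_sum, smul_smul, one_smul,
    iterate_zero_apply, mul_comm (t m ^ q)]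
  abel

theorem surjective_sub_of_map_smul_eq_pow_smul {K V : Type*} [Field K] [IsAlgClosed K]
    [AddCommGroup V] [Module K V] [FiniteDimensional K V] {q : ℕ} (hq : 1 < q) (φ : V →+ V)
    (hφ : ∀ (c : K) (x : V), φ (c • x) = c ^ q • φ x) : Surjective fun x => x - φ x := by
  intro v
  obtain ⟨_ | m, c, hrel⟩ := IsNoetherian.exists_eq_sum_range_smul (R := K) fun i => φ^[i] v
  · exact ⟨0, by simpa [eq_comm] using hrel⟩
  obtain ⟨s, hs⟩ := IsAlgClosed.exists_eval_pow_eq_self (frobeniusCyclicPoly q c m) hq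
  exact ⟨_, sub_map_sum_smul_iterate_eq φ hφ v m c
    (fun i => (frobeniusCyclicPoly q c i).eval (s ^ q)) hrel
    (by simp [frobeniusCyclicPoly, hs]) fun i => by simp [frobeniusCyclicPoly, hs]⟩

end SemilinearEndomorphism

theorem exists_sub_sub_map_mem_ker_smul_top {R K : Type u} {M : Type*} [CommRing R] [Field K]
    [IsAlgClosed K] [AddCommGroup M] [Module R M] [Module.Finite R M] (π : R →+* K)
    (hπ : Surjective π) {q : ℕ} (hq : 1 < q) (σ : R → R) (hσ : ∀ r, π (σ r) = π r ^ q)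
    (Φ : M →+ M) (hΦ : ∀ (r : R) (x : M), Φ (r • x) = σ r • Φ x) (w : M) :
    ∃ u, w - (u - Φ u) ∈ RingHom.ker π • (⊤ : Submodule R M) := by
  set I := RingHom.ker π
  have : I.IsMaximal := RingHom.ker_isMaximal_of_surjective π hπ
  let _ := Ideal.Quotient.field I
  have : IsAlgClosed (R ⧸ I) :=
    .of_ringEquiv K _ (RingHom.quotientKerEquivOfSurjective hπ).symm
  set N : Submodule R M := I • ⊤
  have hΦN : N.toAddSubgroup ≤ N.toAddSubgroup.comap Φ := by
    intro x hx
    refine Submodule.smul_induction_on hx (fun r hr y _ => ?_) fun y z hy hz => ?_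
    · show Φ (r • y) ∈ N
      rw [hΦ]
      refine Submodule.smul_mem_smul ?_ Submodule.mem_top
      rw [RingHom.mem_ker, hσ, RingHom.mem_ker.mp hr, zero_pow (by omega)]
    · simp only [AddSubgroup.mem_comap, map_add] at hy hz ⊢
      exact add_mem hy hz
  let φ : M ⧸ N →+ M ⧸ N := QuotientAddGroup.map _ _ Φ hΦN
  have hφ : ∀ (c : R ⧸ I) (x : M ⧸ N), φ (c • x) = c ^ q • φ x := by
    rintro ⟨r⟩ ⟨x⟩
    show Submodule.Quotient.mk (Φ (r • x))
      = Ideal.Quotient.mk I r ^ q • Submodule.Quotient.mk (Φ x)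
    rw [hΦ, ← map_pow, Module.Quotient.mk_smul_mk, Submodule.Quotient.eq, ← sub_smul]
    refine Submodule.smul_mem_smul ?_ Submodule.mem_top
    rw [RingHom.mem_ker, map_sub, map_pow, hσ, sub_self]
  obtain ⟨u, hu⟩ := surjective_sub_of_map_smul_eq_pow_smul hq φ hφ (Submodule.Quotient.mk w)
  obtain ⟨u, rfl⟩ := Submodule.Quotient.mk_surjective N u
  exact ⟨u, (Submodule.Quotient.eq N).mp hu.symm⟩

theorem surjective_sub_of_isNilpotent {R M : Type*} [Semiring R] [AddCommGroup M] [Module R M]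
    {ϖ : R} (hϖ : IsNilpotent ϖ) (Φ : M →+ M) (hΦ : ∀ x, Φ (ϖ • x) = ϖ • Φ x)
    (h : ∀ w, ∃ u u', w = u - Φ u + ϖ • u') : Surjective fun x => x - Φ x := by
  have hΦpow : ∀ j x, Φ (ϖ ^ j • x) = ϖ ^ j • Φ x := by
    intro j
    induction j with
    | zero => simp
    | succ j ih => intro x; rw [pow_succ', mul_smul, hΦ, ih, mul_smul]
  have approx : ∀ j w, ∃ x y, w = x - Φ x + ϖ ^ j • y := by
    intro j
    induction j with
    | zero => exact fun w => ⟨0, w, by simp⟩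
    | succ j ih =>
      intro w
      obtain ⟨x, y, rfl⟩ := ih w
      obtain ⟨u, u', rfl⟩ := h y
      refine ⟨x + ϖ ^ j • u, u', ?_⟩
      rw [map_add, hΦpow, pow_succ, mul_smul, smul_add, smul_sub]
      abel
  obtain ⟨n, hn⟩ := hϖ
  intro w
  obtain ⟨x, y, rfl⟩ := approx n w
  exact ⟨x, by rw [hn, zero_smul, add_zero]⟩

namespace TruncatedWittVector

variable {p : ℕ} [Fact p.Prime] {k : Type*} [CommRing k]

noncomputable def constantCoeff (n : ℕ) : TruncatedWittVector p (n + 1) k →+* k :=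
  (WittVector.truncate (n + 1)).liftOfSurjective (WittVector.truncate_surjective p (n + 1) k)
    ⟨WittVector.constantCoeff, fun x hx => (WittVector.mem_ker_truncate _ x).mp hx 0 n.succ_pos⟩

theorem constantCoeff_truncate (n : ℕ) (x : WittVector p k) :
    constantCoeff n (WittVector.truncate (n + 1) x) = x.coeff 0 :=
  RingHom.liftOfRightInverse_comp_apply _ _ _ _ x

theorem constantCoeff_apply (n : ℕ) (y : TruncatedWittVector p (n + 1) k) :
    constantCoeff n y = y.coeff 0 := by
  obtain ⟨x, rfl⟩ := WittVector.truncate_surjective p (n + 1) k y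
  rw [constantCoeff_truncate, WittVector.coeff_truncate]
  rfl

theorem constantCoeff_surjective (n : ℕ) :
    Surjective (constantCoeff (p := p) (k := k) n) :=
  fun a => ⟨mk p fun _ => a, by rw [constantCoeff_apply, coeff_mk]⟩

theorem constantCoeff_truncatedWittFrobenius (n : ℕ) (y : TruncatedWittVector p (n + 1) k) :
    constantCoeff n (truncatedWittFrobenius p (n + 1) k y) = constantCoeff n y ^ p := by
  rw [constantCoeff_apply, constantCoeff_apply, truncatedWittFrobenius, coeff_mk]

variable [CharP k p]

theorem truncatedWittFrobenius_truncate (n : ℕ) (x : WittVector p k) :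
    truncatedWittFrobenius p n k (WittVector.truncate n x)
      = WittVector.truncate n (WittVector.frobenius x) := by
  ext i
  rw [truncatedWittFrobenius, coeff_mk, WittVector.coeff_truncate, WittVector.coeff_truncate,
    WittVector.coeff_frobenius_charP]

theorem truncatedWittFrobenius_natCast (n m : ℕ) : truncatedWittFrobenius p n k m = m := by
  rw [← map_natCast (WittVector.truncate n), truncatedWittFrobenius_truncate, map_natCast]

theorem p_pow_eq_zero (n : ℕ) : (p : TruncatedWittVector p n k) ^ n = 0 := by
  rw [← map_natCast (WittVector.truncate n), ← map_pow, ← RingHom.mem_ker,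
    WittVector.mem_ker_truncate]
  intro i hi
  simpa using WittVector.mul_pow_charP_coeff_zero (1 : WittVector p k) hi

theorem ker_constantCoeff [PerfectRing k p] (n : ℕ) :
    RingHom.ker (constantCoeff (p := p) (k := k) n)
      = Ideal.span {(p : TruncatedWittVector p (n + 1) k)} := by
  have hcomp : (constantCoeff (p := p) (k := k) n).comp (WittVector.truncate (n + 1))
      = WittVector.constantCoeff :=
    RingHom.ext (constantCoeff_truncate n)
  rw [← Ideal.map_comap_of_surjective _ (WittVector.truncate_surjective p (n + 1) k)
    (RingHom.ker _), RingHom.comap_ker, hcomp, WittVector.ker_constantCoeff, Ideal.map_span,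
    Set.image_singleton, map_natCast]

end TruncatedWittVector

open TruncatedWittVector in
theorem one_sub_sigma_linear_surjective_general
    (p d n : ℕ) [Fact p.Prime]
    (M : Type*) [AddCommGroup M] [Module (TruncatedWittVector p n (FqBar p d)) M]
    [Module.Finite (TruncatedWittVector p n (FqBar p d)) M]
    (Φ : M →+ M)
    (hΦ : ∀ (c : TruncatedWittVector p n (FqBar p d)) (x : M),
      Φ (c • x) = truncatedWittFrobenius p n (FqBar p d) c • Φ x) :
    Function.Surjective (fun x : M => x - Φ x) := by
  obtain _ | n := n
  · have : Subsingleton (TruncatedWittVector p 0 (FqBar p d)) :=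
      inferInstanceAs (Subsingleton (Fin 0 → _))
    have := Module.subsingleton (TruncatedWittVector p 0 (FqBar p d)) M
    exact fun v => ⟨v, Subsingleton.elim _ _⟩
  refine surjective_sub_of_isNilpotent ⟨n + 1, p_pow_eq_zero (n + 1)⟩ Φ
    (fun x => by rw [hΦ, truncatedWittFrobenius_natCast]) fun w => ?_
  obtain ⟨u, hu⟩ := exists_sub_sub_map_mem_ker_smul_top (constantCoeff n)
    (constantCoeff_surjective n) (Fact.out : p.Prime).one_lt _
    (constantCoeff_truncatedWittFrobenius n) Φ hΦ w
  rw [TruncatedWittVector.ker_constantCoeff, Submodule.ideal_span_singleton_smul,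
    Submodule.mem_smul_pointwise_iff_exists] at hu
  obtain ⟨u', -, hu'⟩ := hu
  exact ⟨u, u', by rw [hu']; abel⟩

/-- Let `k` be an algebraic closure of `𝔽_q` (`q` a power of `p`), let `M` be a
finitely generated `W_n(k)`-module, and let `Φ : M → M` be a `σ`-linear endomorphism, where `σ`
is the Witt-vector Frobenius on `W_n(k)`.  Then the map `1 - Φ : M → M` is surjective. -/
theorem one_sub_sigma_linear_surjective
    (p d n : ℕ) [Fact p.Prime] (hd : d ≠ 0)
    (M : Type*) [AddCommGroup M] [Module (TruncatedWittVector p n (FqBar p d)) M]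
    [Module.Finite (TruncatedWittVector p n (FqBar p d)) M]
    (Φ : M →+ M)
    (hΦ : ∀ (c : TruncatedWittVector p n (FqBar p d)) (x : M),
      Φ (c • x) = truncatedWittFrobenius p n (FqBar p d) c • Φ x) :
    Function.Surjective (fun x : M => x - Φ x) :=
  one_sub_sigma_linear_surjective_general p d n M Φ hΦ
end
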